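/- For the simplex multi-index set I = {𝐢 ∈ ℕ_{≥1}^N : Σ_n i_n ≤ w + N}, the combination coefficient c_𝐢 = Σ_{𝐣 ∈ {0,1}^N, 𝐢+𝐣 ∈ I} (-1)^{|𝐣|} is given by the classical formula c_𝐢 = (-1)^{w+N-|𝐢|} · C(N-1, w+N-|𝐢|) whenever w+1 ≤ |𝐢| ≤ w+N, and c_𝐢 = 0 for |𝐢| ≤ w. -/

import Mathlib

/-- Membership in the simplex multi-index set
`I = {𝐢 ∈ (ℕ_{≥1})^N : ∑_n i_n ≤ w + N}`. -/
def inSimplexSet {N : ℕ} (w : ℕ) (i : Fin N → ℕ) : Prop :=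
  (∀ n, 1 ≤ i n) ∧ ∑ n, i n ≤ w + N

open Classical in
/-- The combination technique coefficient for the simplex set,
`c_𝐢 = ∑_{𝐣 ∈ {0,1}^N, 𝐢+𝐣 ∈ I} (-1)^{|𝐣|}`. -/
noncomputable def simplexCombCoeff {N : ℕ} (w : ℕ) (i : Fin N → ℕ) : ℤ :=
  ∑ b : Fin N → Bool,
    if inSimplexSet w (fun n => i n + (if b n then 1 else 0)) then
      (-1 : ℤ) ^ (Finset.univ.filter (fun n => b n = true)).card
    else 0

/-
With `m = w + N - |𝐢|`, the multi-index `𝐢 + 𝐣` lies in `I` exactly when `|𝐣| ≤ m`, so `c_𝐢` is the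
truncated alternating sum `∑_{k ≤ m} (-1)^k C(N, k)`, which telescopes by Pascal's rule to
`(-1)^m C(N - 1, m)`. For `|𝐢| ≤ w` we have `m ≥ N`, and this binomial coefficient vanishes.
-/

open Finset

def funBoolEquivFinset (α : Type*) [Fintype α] [DecidableEq α] : (α → Bool) ≃ Finset α where
  toFun b := {a | b a = true}
  invFun t a := decide (a ∈ t)
  left_inv b := by funext a; by_cases h : b a <;> simp [h]
  right_inv t := by ext a; simp

theorem Finset.sum_powerset_filter_card_le_neg_one_pow {α : Type*} {s : Finset α}
    (hs : s.Nonempty) (m : ℕ) :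
    ∑ t ∈ s.powerset with #t ≤ m, (-1 : ℤ) ^ #t = (-1) ^ m * (#s - 1).choose m := by
  obtain ⟨n, hn⟩ : ∃ n, #s = n + 1 := Nat.exists_eq_succ_of_ne_zero hs.card_pos.ne'
  set f : ℕ → ℤ := fun k => if k ≤ m then (-1) ^ k * (n + 1).choose k else 0
  have hf_choose : ∀ k ≥ n + 2, f k = 0 := fun k hk => by
    simp [f, Nat.choose_eq_zero_of_lt (show n + 1 < k by omega)]
  have hf_trunc : ∀ k ≥ m + 1, f k = 0 := fun k hk => by
    simp [f, show ¬k ≤ m by omega]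
  calc ∑ t ∈ s.powerset with #t ≤ m, (-1 : ℤ) ^ #t
      = ∑ k ∈ range (n + 2), f k := by
        rw [sum_filter, sum_powerset_apply_card (fun k => if k ≤ m then (-1 : ℤ) ^ k else 0), hn]
        refine sum_congr rfl fun k _ => ?_
        split_ifs <;> simp [f, *, mul_comm]
    _ = ∑ k ∈ range (m + 1), f k :=
        (eventually_constant_sum hf_choose (by omega : n + 2 ≤ n + m + 3)).symm.trans
          (eventually_constant_sum hf_trunc (by omega : m + 1 ≤ n + m + 3))
    _ = (-1) ^ m * (#s - 1).choose m := by
        rw [hn, Nat.add_sub_cancel, ← Int.alternating_sum_range_choose_eq_choose]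
        exact sum_congr rfl fun k hk => if_pos (Nat.lt_succ_iff.mp (mem_range.mp hk))

section Simplex

variable {N : ℕ} {w : ℕ} {i : Fin N → ℕ}

theorem inSimplexSet_add_indicator_iff (hi : ∀ n, 1 ≤ i n) (h : ∑ n, i n ≤ w + N)
    (b : Fin N → Bool) :
    inSimplexSet w (fun n => i n + if b n then 1 else 0) ↔
      #{n | b n = true} ≤ w + N - ∑ n, i n := by
  have hsum : ∑ n, (i n + if b n then 1 else 0) = ∑ n, i n + #{n | b n = true} := by
    rw [sum_add_distrib, sum_boole, Nat.cast_id]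
  rw [inSimplexSet, hsum]
  exact ⟨fun hb => by omega, fun hb => ⟨fun n => le_add_right (hi n), by omega⟩⟩

theorem simplexCombCoeff_eq_sum_powerset (hi : ∀ n, 1 ≤ i n) (h : ∑ n, i n ≤ w + N) :
    simplexCombCoeff w i =
      ∑ t ∈ (univ : Finset (Fin N)).powerset with #t ≤ w + N - ∑ n, i n, (-1 : ℤ) ^ #t := by
  rw [simplexCombCoeff, powerset_univ, sum_filter,
    ← (funBoolEquivFinset (Fin N)).sum_comp]
  simp only [inSimplexSet_add_indicator_iff hi h]
  rfl

theorem simplexCombCoeff_eq_of_sum_le (hN : 1 ≤ N) (hi : ∀ n, 1 ≤ i n)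
    (h : ∑ n, i n ≤ w + N) :
    simplexCombCoeff w i =
      (-1 : ℤ) ^ (w + N - ∑ n, i n) * (N - 1).choose (w + N - ∑ n, i n) := by
  rw [simplexCombCoeff_eq_sum_powerset hi h,
    sum_powerset_filter_card_le_neg_one_pow (univ_nonempty_iff.mpr ⟨⟨0, hN⟩⟩), card_fin]

end Simplex

/-- for the simplex multi-index set `I = {𝐢 ∈ ℕ_{≥1}^N : ∑ i_n ≤ w+N}`,
the combination coefficient is `(-1)^{w+N-|𝐢|} C(N-1, w+N-|𝐢|)` whenever
`w+1 ≤ |𝐢| ≤ w+N`, and `0` for `|𝐢| ≤ w`. -/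
theorem simplexCombCoeff_formula {N : ℕ} (hN : 1 ≤ N) (w : ℕ) (i : Fin N → ℕ)
    (hi : ∀ n, 1 ≤ i n) :
    ((w + 1 ≤ ∑ n, i n ∧ ∑ n, i n ≤ w + N) →
      simplexCombCoeff w i =
        (-1 : ℤ) ^ (w + N - ∑ n, i n) * (N - 1).choose (w + N - ∑ n, i n)) ∧
    ((∑ n, i n ≤ w) → simplexCombCoeff w i = 0) := by
  refine ⟨fun h => simplexCombCoeff_eq_of_sum_le hN hi h.2, fun h => ?_⟩
  rw [simplexCombCoeff_eq_of_sum_le hN hi (by omega),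
    Nat.choose_eq_zero_of_lt (by omega : N - 1 < w + N - ∑ n, i n)]
  simp
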